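/- arXiv:1210.6060 — 2 statements merged into one kernel-verified Lean document; each statement's English description precedes it below -/
import Mathlib

section
/- Let ζ ∈ ℂ with a = Re ζ ≠ 0. The operator K_ζ on C([0,1],ℂ) defined by (K_ζ f)(x) = e^{ζx} ∫₀ˣ e^{−ζt} f(t) dt is bounded with operator norm exactly (e^a − 1)/a. -/
/-!
Writing `a = Re ζ`, the pointwise estimate
`|K_ζ f (x)| ≤ e^{ax} ∫₀ˣ e^{-at} dt ‖f‖ = (e^{ax} - 1)/a ‖f‖` gives the upper bound, since
`x ↦ (e^{ax} - 1)/a` is increasing. For the phase `f(t) = e^{i Im ζ t}` the integrand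
`e^{-ζt} f(t) = e^{-at}` is positive, so the estimate is an equality at `x = 1`.
-/

open Set intervalIntegral

lemma monotone_exp_mul_sub_one_div (a : ℝ) : Monotone fun x => (Real.exp (a * x) - 1) / a := by
  intro x y hxy
  rcases lt_trichotomy a 0 with h | rfl | h
  · exact div_le_div_of_nonpos_of_le h.le
      (sub_le_sub_right (Real.exp_le_exp.2 (mul_le_mul_of_nonpos_left hxy h.le)) 1)
  · simp
  · dsimp only
    gcongr

lemma exp_mul_integral_exp_neg_mul {a : ℝ} (ha : a ≠ 0) (x : ℝ) :
    Real.exp (a * x) * ∫ t in (0:ℝ)..x, Real.exp (-a * t) = (Real.exp (a * x) - 1) / a := by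
  rw [integral_comp_mul_left (fun t => Real.exp t) (neg_ne_zero.2 ha), integral_exp, smul_eq_mul,
    mul_zero, Real.exp_zero, neg_mul, Real.exp_neg]
  field_simp
  ring

lemma Complex.norm_exp_neg_mul_ofReal (ζ : ℂ) (t : ℝ) :
    ‖Complex.exp (-ζ * t)‖ = Real.exp (-ζ.re * t) := by
  simp [Complex.norm_exp]

namespace ExpVolterra

variable (ζ : ℂ)

noncomputable def integrand (f : C(Icc (0:ℝ) 1, ℂ)) (t : ℝ) : ℂ :=
  Complex.exp (-ζ * t) * f (projIcc 0 1 zero_le_one t)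

lemma continuous_integrand (f : C(Icc (0:ℝ) 1, ℂ)) : Continuous (integrand ζ f) := by
  unfold integrand
  fun_prop

lemma intervalIntegrable_integrand (f : C(Icc (0:ℝ) 1, ℂ)) (a b : ℝ) :
    IntervalIntegrable (integrand ζ f) MeasureTheory.volume a b :=
  (continuous_integrand ζ f).intervalIntegrable a b

lemma integrand_add (f g : C(Icc (0:ℝ) 1, ℂ)) :
    integrand ζ (f + g) = integrand ζ f + integrand ζ g := by
  ext t
  simp only [integrand, ContinuousMap.add_apply, Pi.add_apply, mul_add]

lemma integrand_smul (c : ℂ) (f : C(Icc (0:ℝ) 1, ℂ)) :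
    integrand ζ (c • f) = c • integrand ζ f := by
  ext t
  simp only [integrand, ContinuousMap.smul_apply, Pi.smul_apply, smul_eq_mul]
  ring

noncomputable def operator : C(Icc (0:ℝ) 1, ℂ) →ₗ[ℂ] C(Icc (0:ℝ) 1, ℂ) where
  toFun f := ⟨fun x => Complex.exp (ζ * (x : ℝ)) * ∫ t in (0:ℝ)..x, integrand ζ f t, by
    have hprimitive := continuous_primitive (intervalIntegrable_integrand ζ f) 0
    fun_prop⟩
  map_add' f g := by
    ext x
    simp only [ContinuousMap.coe_mk, ContinuousMap.add_apply, integrand_add, Pi.add_apply,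
      integral_add (intervalIntegrable_integrand ζ f _ _) (intervalIntegrable_integrand ζ g _ _),
      mul_add]
  map_smul' c f := by
    ext x
    simp only [ContinuousMap.coe_mk, ContinuousMap.smul_apply, integrand_smul, Pi.smul_apply,
      smul_eq_mul, integral_const_mul, RingHom.id_apply]
    ring

lemma operator_apply (f : C(Icc (0:ℝ) 1, ℂ)) (x : Icc (0:ℝ) 1) :
    operator ζ f x = Complex.exp (ζ * (x : ℝ)) * ∫ t in (0:ℝ)..x, integrand ζ f t :=
  rfl

lemma norm_integrand_le (f : C(Icc (0:ℝ) 1, ℂ)) (t : ℝ) :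
    ‖integrand ζ f t‖ ≤ Real.exp (-ζ.re * t) * ‖f‖ := by
  rw [integrand, norm_mul, Complex.norm_exp_neg_mul_ofReal]
  gcongr
  exact f.norm_coe_le_norm _

variable {ζ}

lemma norm_operator_apply_le (ha : ζ.re ≠ 0) (f : C(Icc (0:ℝ) 1, ℂ)) (x : Icc (0:ℝ) 1) :
    ‖operator ζ f x‖ ≤ (Real.exp (ζ.re * x) - 1) / ζ.re * ‖f‖ :=
  calc ‖operator ζ f x‖ = Real.exp (ζ.re * x) * ‖∫ t in (0:ℝ)..x, integrand ζ f t‖ := by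
        rw [operator_apply, norm_mul, Complex.norm_exp]
        simp
    _ ≤ Real.exp (ζ.re * x) * ∫ t in (0:ℝ)..x, Real.exp (-ζ.re * t) * ‖f‖ := by
        gcongr
        exact norm_integral_le_of_norm_le x.2.1
          (MeasureTheory.ae_of_all _ fun t _ => norm_integrand_le ζ f t)
          (by apply Continuous.intervalIntegrable; fun_prop)
    _ = (Real.exp (ζ.re * x) - 1) / ζ.re * ‖f‖ := by
        rw [integral_mul_const, ← mul_assoc, exp_mul_integral_exp_neg_mul ha]

lemma norm_operator_le (ha : ζ.re ≠ 0) (f : C(Icc (0:ℝ) 1, ℂ)) :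
    ‖operator ζ f‖ ≤ (Real.exp ζ.re - 1) / ζ.re * ‖f‖ := by
  refine (ContinuousMap.norm_le_of_nonempty _).2 fun x => (norm_operator_apply_le ha f x).trans ?_
  exact mul_le_mul_of_nonneg_right (by simpa using monotone_exp_mul_sub_one_div ζ.re x.2.2)
    (norm_nonneg f)

variable (ζ)

noncomputable def phase : C(Icc (0:ℝ) 1, ℂ) :=
  ⟨fun x => Complex.exp (ζ.im * (x : ℝ) * Complex.I), by fun_prop⟩

lemma norm_phase_le : ‖phase ζ‖ ≤ 1 :=
  (ContinuousMap.norm_le _ zero_le_one).2 fun x => by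
    rw [phase, ContinuousMap.coe_mk, ← Complex.ofReal_mul, Complex.norm_exp_ofReal_mul_I]

lemma integrand_phase {t : ℝ} (ht : t ∈ Icc (0:ℝ) 1) :
    integrand ζ (phase ζ) t = Real.exp (-ζ.re * t) := by
  rw [integrand, phase, ContinuousMap.coe_mk, projIcc_of_mem zero_le_one ht, ← Complex.exp_add,
    Complex.ofReal_exp]
  congr 1
  apply Complex.ext <;> simp

variable {ζ}

lemma norm_operator_phase_one (ha : ζ.re ≠ 0) :
    ‖operator ζ (phase ζ) ⟨1, right_mem_Icc.2 zero_le_one⟩‖ = (Real.exp ζ.re - 1) / ζ.re := by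
  have hI : ∫ t in (0:ℝ)..1, integrand ζ (phase ζ) t = ↑(∫ t in (0:ℝ)..1, Real.exp (-ζ.re * t)) := by
    rw [← integral_ofReal]
    refine integral_congr fun t ht => integrand_phase ζ ?_
    rwa [uIcc_of_le zero_le_one] at ht
  rw [operator_apply, hI, norm_mul, Complex.norm_exp, Complex.norm_real, Real.norm_of_nonneg
    (integral_nonneg zero_le_one fun t _ => (Real.exp_pos _).le)]
  simpa using exp_mul_integral_exp_neg_mul ha 1

end ExpVolterra

open ExpVolterra in
/-- For `ζ ∈ ℂ` with `a = Re ζ ≠ 0`, the operator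
`(K_ζ f)(x) = e^{ζx} ∫₀ˣ e^{-ζt} f(t) dt` on `C([0,1],ℂ)` is bounded with
operator norm exactly `(e^a - 1)/a`. -/
theorem stmt_8 (ζ : ℂ) (ha : ζ.re ≠ 0) :
    ∃ K : C(↥(Set.Icc (0:ℝ) 1), ℂ) →L[ℂ] C(↥(Set.Icc (0:ℝ) 1), ℂ),
      (∀ (f : C(↥(Set.Icc (0:ℝ) 1), ℂ)) (x : ↥(Set.Icc (0:ℝ) 1)),
        K f x = Complex.exp (ζ * (x : ℝ)) *
          ∫ t in (0:ℝ)..(x : ℝ),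
            Complex.exp (-ζ * t) * f (Set.projIcc 0 1 zero_le_one t)) ∧
      ‖K‖ = (Real.exp ζ.re - 1) / ζ.re := by
  set K := (operator ζ).mkContinuous _ (norm_operator_le ha)
  refine ⟨K, fun f x => rfl, le_antisymm ?_ ?_⟩
  · exact LinearMap.mkContinuous_norm_le _ (norm_operator_phase_one ha ▸ norm_nonneg _) _
  · calc (Real.exp ζ.re - 1) / ζ.re = ‖K (phase ζ) ⟨1, right_mem_Icc.2 zero_le_one⟩‖ :=
          (norm_operator_phase_one ha).symm
      _ ≤ ‖K (phase ζ)‖ := (K (phase ζ)).norm_coe_le_norm _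
      _ ≤ ‖K‖ * ‖phase ζ‖ := K.le_opNorm _
      _ ≤ ‖K‖ := mul_le_of_le_one_right (norm_nonneg K) (norm_phase_le ζ)
end

section
/- With E = {f ∈ C([0,1],ℂ) : f(0)=0}, F = {u ∈ C¹ : u(0)=u′(0)=0}, T = derivation, and R(ζ) = (ζι − T)^{-1} : E → F. For real ζ > 0: (e^ζ − 1 − ζ)/ζ² ≤ ‖R(ζ)‖ ≤ (e^ζ − 1)/ζ; in particular ‖R(ζ)‖ → ∞ as ζ → +∞. -/
/-!
Since `(K_ζ f)(x) = ∫₀ˣ e^{ζ(x-t)} f(t) dt`, pointwise `|K_ζ f(x)| ≤ ‖f‖ (e^{ζx} - 1)/ζ`, which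
is at most `‖f‖ (e^ζ - 1)/ζ`. For the lower bound take `f(x) = x`, which vanishes at `0` and has
norm `1`; then `(K_ζ f)(1) = e^ζ ∫₀¹ t e^{-ζt} dt = (e^ζ - 1 - ζ)/ζ²`.
-/

open Set intervalIntegral

def pt0 : ↥(Set.Icc (0:ℝ) 1) := ⟨0, Set.left_mem_Icc.mpr zero_le_one⟩

lemma integral_exp_neg_mul (ζ : ℝ) (hζ : ζ ≠ 0) (x : ℝ) :
    ∫ t in (0:ℝ)..x, Real.exp (-ζ * t) = (1 - Real.exp (-ζ * x)) / ζ := by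
  rw [integral_comp_mul_left Real.exp (neg_ne_zero.mpr hζ), integral_exp]
  simp only [mul_zero, Real.exp_zero, smul_eq_mul]
  field_simp
  ring

lemma integral_exp_neg_mul_mul_self (ζ : ℝ) (hζ : ζ ≠ 0) (x : ℝ) :
    ∫ t in (0:ℝ)..x, Real.exp (-ζ * t) * t = (1 - Real.exp (-ζ * x) * (ζ * x + 1)) / ζ ^ 2 := by
  have hderiv (t : ℝ) : HasDerivAt (fun s => -(Real.exp (-ζ * s) * (ζ * s + 1)) / ζ ^ 2)
      (Real.exp (-ζ * t) * t) t := by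
    have hexp := ((hasDerivAt_id t).const_mul (-ζ)).exp
    have hlin := ((hasDerivAt_id t).const_mul ζ).add_const 1
    refine (((hexp.mul hlin).neg).div_const (ζ ^ 2)).congr_deriv ?_
    simp only [id]
    field_simp
    ring
  rw [integral_eq_sub_of_hasDerivAt (fun t _ => hderiv t)
    (by apply Continuous.intervalIntegrable; fun_prop)]
  simp only [neg_mul, mul_zero, Real.exp_zero, zero_add, mul_one]
  ring

/-- The operator `K_ζ`, so that `R(ζ) = -K_ζ`. -/
noncomputable def volterraExp (ζ : ℝ) (f : C(Icc (0:ℝ) 1, ℂ)) : C(Icc (0:ℝ) 1, ℂ) where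
  toFun x := Complex.exp ((ζ : ℂ) * (x : ℝ)) *
    ∫ t in (0:ℝ)..(x : ℝ), Complex.exp (-(ζ : ℂ) * t) * f (projIcc 0 1 zero_le_one t)
  continuous_toFun := by
    have hint : Continuous fun y : ℝ =>
        ∫ t in (0:ℝ)..y, Complex.exp (-(ζ : ℂ) * t) * f (projIcc 0 1 zero_le_one t) :=
      continuous_primitive (fun _ _ => Continuous.intervalIntegrable (by fun_prop) _ _) 0
    fun_prop

lemma norm_volterraExp_apply_le (ζ : ℝ) (hζ : ζ ≠ 0) (f : C(Icc (0:ℝ) 1, ℂ)) (x : Icc (0:ℝ) 1) :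
    ‖volterraExp ζ f x‖ ≤ (Real.exp (ζ * x) - 1) / ζ * ‖f‖ := by
  have hbound : ‖∫ t in (0:ℝ)..(x : ℝ), Complex.exp (-(ζ : ℂ) * t) * f (projIcc 0 1 zero_le_one t)‖
      ≤ ∫ t in (0:ℝ)..(x : ℝ), Real.exp (-ζ * t) * ‖f‖ := by
    refine norm_integral_le_of_norm_le x.2.1 (Filter.Eventually.of_forall fun t _ => ?_)
      (Continuous.intervalIntegrable (by fun_prop) _ _)
    rw [norm_mul, Complex.norm_exp]
    gcongr
    · simp
    · exact f.norm_coe_le_norm _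
  calc ‖volterraExp ζ f x‖
      ≤ Real.exp (ζ * x) * ∫ t in (0:ℝ)..(x : ℝ), Real.exp (-ζ * t) * ‖f‖ := by
        simp only [volterraExp, ContinuousMap.coe_mk, norm_mul, Complex.norm_exp]
        gcongr
        simp
    _ = (Real.exp (ζ * x) - 1) / ζ * ‖f‖ := by
        rw [integral_mul_const, integral_exp_neg_mul ζ hζ, neg_mul, Real.exp_neg]
        field_simp

lemma norm_volterraExp_le (ζ : ℝ) (hζ : 0 < ζ) (f : C(Icc (0:ℝ) 1, ℂ)) :
    ‖volterraExp ζ f‖ ≤ (Real.exp ζ - 1) / ζ * ‖f‖ := by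
  have hC : 0 ≤ (Real.exp ζ - 1) / ζ := div_nonneg (by linarith [Real.add_one_le_exp ζ]) hζ.le
  refine (ContinuousMap.norm_le _ (mul_nonneg hC (norm_nonneg f))).mpr fun x => ?_
  refine (norm_volterraExp_apply_le ζ hζ.ne' f x).trans ?_
  have hx : ζ * x ≤ ζ := mul_le_of_le_one_right hζ.le x.2.2
  gcongr

noncomputable def coordIcc : C(Icc (0:ℝ) 1, ℂ) := ⟨fun x => ((x : ℝ) : ℂ), by fun_prop⟩

lemma norm_coordIcc_le : ‖coordIcc‖ ≤ 1 :=
  (ContinuousMap.norm_le _ zero_le_one).mpr fun x => by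
    simpa [coordIcc, abs_of_nonneg x.2.1] using x.2.2

lemma volterraExp_coordIcc_one (ζ : ℝ) (hζ : ζ ≠ 0) :
    volterraExp ζ coordIcc ⟨1, right_mem_Icc.mpr zero_le_one⟩
      = ((Real.exp ζ - 1 - ζ) / ζ ^ 2 : ℝ) := by
  have hintegral :
      ∫ t in (0:ℝ)..1, Complex.exp (-(ζ : ℂ) * t) * coordIcc (projIcc 0 1 zero_le_one t)
        = ((∫ t in (0:ℝ)..1, Real.exp (-ζ * t) * t : ℝ) : ℂ) := by
    rw [← integral_ofReal]
    refine integral_congr fun t ht => ?_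
    rw [uIcc_of_le zero_le_one] at ht
    simp [coordIcc, projIcc_of_mem _ ht, Complex.ofReal_exp]
  simp only [volterraExp, ContinuousMap.coe_mk]
  rw [hintegral, integral_exp_neg_mul_mul_self ζ hζ]
  push_cast [Complex.ofReal_exp]
  rw [neg_mul, Complex.exp_neg]
  field_simp
  ring

lemma le_norm_volterraExp_coordIcc (ζ : ℝ) (hζ : ζ ≠ 0) :
    (Real.exp ζ - 1 - ζ) / ζ ^ 2 ≤ ‖volterraExp ζ coordIcc‖ := by
  refine le_trans ?_
    ((volterraExp ζ coordIcc).norm_coe_le_norm ⟨1, right_mem_Icc.mpr zero_le_one⟩)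
  rw [volterraExp_coordIcc_one ζ hζ, Complex.norm_real, Real.norm_eq_abs]
  exact le_abs_self _

/-- With `E = {f ∈ C([0,1],ℂ) : f(0)=0}` and `R(ζ)f = -K_ζ f` the resolvent of
the derivation operator, for real `ζ > 0`:
`(e^ζ - 1 - ζ)/ζ² ≤ ‖R(ζ)‖ ≤ (e^ζ - 1)/ζ`. Upper bound: `‖R(ζ)f‖ ≤ ((e^ζ-1)/ζ)‖f‖`
for every `f ∈ E`; lower bound: some `f ∈ E` with `‖f‖ ≤ 1` has
`‖R(ζ)f‖ ≥ (e^ζ - 1 - ζ)/ζ²`. In particular `‖R(ζ)‖ → ∞` as `ζ → ∞`. -/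
theorem stmt_15 (ζ : ℝ) (hζ : 0 < ζ) :
    (∀ f g : C(↥(Set.Icc (0:ℝ) 1), ℂ), f pt0 = 0 →
      (∀ x : ↥(Set.Icc (0:ℝ) 1),
        g x = -(Complex.exp ((ζ : ℂ) * (x : ℝ)) *
          ∫ t in (0:ℝ)..(x : ℝ),
            Complex.exp (-(ζ : ℂ) * t) * f (Set.projIcc 0 1 zero_le_one t))) →
      ‖g‖ ≤ (Real.exp ζ - 1) / ζ * ‖f‖) ∧
    (∃ f g : C(↥(Set.Icc (0:ℝ) 1), ℂ), f pt0 = 0 ∧ ‖f‖ ≤ 1 ∧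
      (∀ x : ↥(Set.Icc (0:ℝ) 1),
        g x = -(Complex.exp ((ζ : ℂ) * (x : ℝ)) *
          ∫ t in (0:ℝ)..(x : ℝ),
            Complex.exp (-(ζ : ℂ) * t) * f (Set.projIcc 0 1 zero_le_one t))) ∧
      (Real.exp ζ - 1 - ζ) / ζ ^ 2 ≤ ‖g‖) := by
  constructor
  · intro f g _ hg
    obtain rfl : g = -volterraExp ζ f := ContinuousMap.ext hg
    rw [norm_neg]
    exact norm_volterraExp_le ζ hζ f
  · refine ⟨coordIcc, -volterraExp ζ coordIcc, by simp [coordIcc, pt0], norm_coordIcc_le,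
      fun _ => rfl, ?_⟩
    rw [norm_neg]
    exact le_norm_volterraExp_coordIcc ζ hζ.ne'
end
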